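/- If the hyperspace system (2^X, 2^f) has limit shadowing, then (X,f) has limit shadowing. -/
import Mathlib

open Filter Topology TopologicalSpace

/-- The induced map on the hyperspace of nonempty compact subsets. -/
def hyperMap {X : Type*} [MetricSpace X] (f : X → X) (hf : Continuous f) :
    NonemptyCompacts X → NonemptyCompacts X :=
  fun A => ⟨⟨f '' A, A.isCompact.image hf⟩, A.nonempty.image f⟩

lemma hausdorffDist_singleton_singleton {X : Type*} [MetricSpace X] (a b : X) :
    Metric.hausdorffDist ({a} : Set X) {b} = dist a b := by
  apply le_antisymm
  · apply Metric.hausdorffDist_le_of_mem_dist dist_nonneg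
    · intro y hy; rw [Set.mem_singleton_iff] at hy
      exact ⟨b, rfl, by rw [hy]⟩
    · intro y hy; rw [Set.mem_singleton_iff] at hy
      exact ⟨a, rfl, by rw [hy, dist_comm]⟩
  · have h := Metric.infDist_le_hausdorffDist_of_mem (x := a) (s := ({a} : Set X))
      (t := {b}) rfl (by
        apply Metric.hausdorffEdist_ne_top_of_nonempty_of_bounded <;>
          simp [Bornology.isBounded_singleton])
    simpa [Metric.infDist_singleton] using h

lemma hyperMap_iterate_coe {X : Type*} [MetricSpace X] (f : X → X) (hf : Continuous f)
    (B : NonemptyCompacts X) (i : ℕ) :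
    ((hyperMap f hf)^[i] B : Set X) = f^[i] '' (B : Set X) := by
  induction i with
  | zero => simp
  | succ n ih =>
    rw [Function.iterate_succ_apply']
    show f '' ((hyperMap f hf)^[n] B : Set X) = _
    rw [ih, ← Set.image_comp, ← Function.iterate_succ']

/-- if the hyperspace system (2ˣ, 2ᶠ) has limit shadowing, then (X, f) has
limit shadowing. -/
theorem limitShadowing_of_hyperspace_limitShadowing
    {X : Type*} [MetricSpace X] [CompactSpace X]
    (f : X → X) (hf : Continuous f)
    (hsh : ∀ A : ℕ → NonemptyCompacts X,
      Tendsto (fun i => dist (hyperMap f hf (A i)) (A (i + 1))) atTop (nhds 0) →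
      ∃ B : NonemptyCompacts X,
        Tendsto (fun i => dist ((hyperMap f hf)^[i] B) (A i)) atTop (nhds 0)) :
    ∀ x : ℕ → X,
      Tendsto (fun i => dist (f (x i)) (x (i + 1))) atTop (nhds 0) →
      ∃ z : X, Tendsto (fun i => dist (f^[i] z) (x i)) atTop (nhds 0) := by
  intro x hx
  set A : ℕ → NonemptyCompacts X := fun i => ⟨⟨{x i}, isCompact_singleton⟩, ⟨x i, rfl⟩⟩ with hA
  have hdist : ∀ i, dist (hyperMap f hf (A i)) (A (i + 1)) = dist (f (x i)) (x (i + 1)) := by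
    intro i
    rw [Metric.NonemptyCompacts.dist_eq]
    show Metric.hausdorffDist (f '' {x i}) {x (i + 1)} = _
    rw [Set.image_singleton, hausdorffDist_singleton_singleton]
  obtain ⟨B, hB⟩ := hsh A (by simpa only [hdist] using hx)
  obtain ⟨z, hz⟩ := B.nonempty
  refine ⟨z, ?_⟩
  have hle : ∀ i, dist (f^[i] z) (x i) ≤ dist ((hyperMap f hf)^[i] B) (A i) := by
    intro i
    rw [Metric.NonemptyCompacts.dist_eq]
    have hmem : f^[i] z ∈ ((hyperMap f hf)^[i] B : Set X) := by
      rw [hyperMap_iterate_coe]; exact ⟨z, hz, rfl⟩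
    have hfin : EMetric.hausdorffEdist ((hyperMap f hf)^[i] B : Set X) (A i : Set X) ≠ ⊤ :=
      Metric.hausdorffEdist_ne_top_of_nonempty_of_bounded
        ((hyperMap f hf)^[i] B).nonempty (A i).nonempty
        ((hyperMap f hf)^[i] B).isCompact.isBounded (A i).isCompact.isBounded
    have h := Metric.infDist_le_hausdorffDist_of_mem hmem hfin
    have : Metric.infDist (f^[i] z) (A i : Set X) = dist (f^[i] z) (x i) := by
      show Metric.infDist (f^[i] z) {x i} = _
      exact Metric.infDist_singleton
    linarith
  exact squeeze_zero (fun i => dist_nonneg) hle hB
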